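/- arXiv:1204.5062 — 2 statements merged into one kernel-verified Lean document; each statement's English description precedes it below -/
import Mathlib

section
/- Let Φ be a frame for 𝕂^n with m vectors such that for every j = 1,…,n the submatrix Φ^(j) is in general position. Then the minimum of ‖Ψ‖₀ over all dual frames Ψ of Φ equals exactly n². -/
open Matrix

/-- The number of non-vanishing entries of a matrix (the `ℓ₀`-"norm"). -/
noncomputable def l0Norm {𝕂 : Type} [RCLike 𝕂] {n m : ℕ}
    (Ψ : Matrix (Fin n) (Fin m) 𝕂) : ℕ :=
  Set.ncard {p : Fin n × Fin m | Ψ p.1 p.2 ≠ 0}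

/-- The submatrix of `Φ` obtained by deleting the `j`-th row. -/
def deleteRow {𝕂 : Type} [RCLike 𝕂] {n m : ℕ}
    (Φ : Matrix (Fin n) (Fin m) 𝕂) (j : Fin n) :
    Matrix {i : Fin n // i ≠ j} (Fin m) 𝕂 :=
  fun i k => Φ i.1 k

/-- A matrix is in general position (relative to the cardinality `k`) if every
collection of `k` of its columns is linearly independent. -/
def InGeneralPosition {𝕂 : Type} [RCLike 𝕂] {l : Type} {m : ℕ}
    (M : Matrix l (Fin m) 𝕂) (k : ℕ) : Prop :=
  ∀ S : Finset (Fin m), S.card = k →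
    LinearIndependent 𝕂 (fun i : S => fun r => M r (i : Fin m))

/-! Row `j` of a dual `Ψ` is orthogonal to every row of `Φ` except the `j`-th, so its conjugate
is a linear dependency among the columns of `Φ^(j)`. Since any `n - 1` of those columns are
independent and the row is nonzero (its inner product with row `j` of `Φ` is `1`), it has at least
`n` nonzero entries. Conversely, `Φ` has `n` linearly independent columns, forming an invertible
submatrix `A`; placing the rows of `(Aᴴ)⁻¹` on those columns gives a dual with at most `n` nonzero
entries per row. -/

open Function

lemma l0Norm_eq_sum_ncard_support_row {𝕂 : Type} [RCLike 𝕂] {n m : ℕ}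
    (Ψ : Matrix (Fin n) (Fin m) 𝕂) :
    l0Norm Ψ = ∑ j, (support (Ψ j)).ncard := by
  classical
  simp only [l0Norm, Set.ncard_eq_toFinset_card', Set.toFinset_ofPred, support,
    Finset.card_filter, Fintype.sum_prod_type]

theorem InGeneralPosition.eq_zero_of_mulVec_eq_zero {𝕂 : Type} [RCLike 𝕂] {l : Type}
    {m k : ℕ} {M : Matrix l (Fin m) 𝕂} (hM : InGeneralPosition M k) (hkm : k ≤ m)
    {v : Fin m → 𝕂} (hv : M *ᵥ v = 0) (hsupp : (support v).ncard ≤ k) : v = 0 := by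
  classical
  obtain ⟨S, hvS, -, hS⟩ := Finset.exists_subsuperset_card_eq (n := k)
    (Finset.subset_univ (support v).toFinset)
    (by rwa [← Set.ncard_eq_toFinset_card']) (by simpa using hkm)
  have hv_off : ∀ i ∉ S, v i = 0 := fun i hi ↦
    notMem_support.mp fun h ↦ hi (hvS (Set.mem_toFinset.mpr h))
  have hvS_zero := Fintype.linearIndependent_iff.mp (hM S hS) (fun i ↦ v i) <| by
    ext r
    have hr : ∑ i, M r i * v i = 0 := congrFun hv r
    rw [← Finset.sum_subset S.subset_univ fun i _ hi ↦ by simp [hv_off i hi],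
      ← Finset.sum_coe_sort] at hr
    simpa [mul_comm] using hr
  ext i
  by_cases hi : i ∈ S
  exacts [hvS_zero ⟨i, hi⟩, hv_off i hi]

theorem Matrix.le_of_mul_eq_one {K : Type*} [Field K] {n m : ℕ} {A : Matrix (Fin n) (Fin m) K}
    {B : Matrix (Fin m) (Fin n) K} (h : A * B = 1) : n ≤ m :=
  calc n = (A * B).rank := by simp [h]
    _ ≤ A.rank := rank_mul_le_left A B
    _ ≤ m := rank_le_width A

lemma deleteRow_mulVec_star_row_eq_zero {𝕂 : Type} [RCLike 𝕂] {n m : ℕ}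
    {Φ Ψ : Matrix (Fin n) (Fin m) 𝕂} (h : Ψ * Φᴴ = 1) (j : Fin n) :
    deleteRow Φ j *ᵥ star (Ψ j) = 0 := by
  ext r
  have hjr : (Ψ * Φᴴ) j r = 0 := by rw [h]; exact one_apply_ne (Ne.symm r.2)
  simpa [mul_apply, mulVec, dotProduct, deleteRow, star_sum, mul_comm] using congrArg star hjr

theorem le_ncard_support_row_of_mul_conjTranspose_eq_one {𝕂 : Type} [RCLike 𝕂] {n m : ℕ}
    {Φ Ψ : Matrix (Fin n) (Fin m) 𝕂} (hGP : ∀ j, InGeneralPosition (deleteRow Φ j) (n - 1))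
    (hΨ : Ψ * Φᴴ = 1) (j : Fin n) : n ≤ (support (Ψ j)).ncard := by
  by_contra! hlt
  have hsupp : support (star (Ψ j)) = support (Ψ j) := by ext; simp
  have hstar : star (Ψ j) = 0 := (hGP j).eq_zero_of_mulVec_eq_zero
    (by have := le_of_mul_eq_one hΨ; omega) (deleteRow_mulVec_star_row_eq_zero hΨ j)
    (by rw [hsupp]; omega)
  have hjj : (Ψ * Φᴴ) j j = 1 := by rw [hΨ]; exact one_apply_eq j
  simp [mul_apply, star_eq_zero.mp hstar] at hjj

theorem Matrix.exists_isUnit_submatrix_of_rank_eq {K : Type*} [Field K] {n : ℕ} {ι : Type*}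
    [Fintype ι] (Φ : Matrix (Fin n) ι K) (h : Φ.rank = n) :
    ∃ g : Fin n → ι, IsUnit (Φ.submatrix id g) := by
  obtain ⟨κ, a, -, hspan, hli⟩ := exists_linearIndependent' K Φ.col
  have : Finite κ := hli.finite
  cases nonempty_fintype κ
  have hcard : Fintype.card κ = n := by
    rw [← finrank_span_eq_card hli, hspan, ← rank_eq_finrank_span_cols, h]
  let e := Fintype.equivFinOfCardEq hcard
  exact ⟨a ∘ e.symm, linearIndependent_cols_iff_isUnit.mp (hli.comp e.symm e.symm.injective)⟩

theorem Matrix.exists_mul_conjTranspose_eq_one_of_isUnit_submatrix {K : Type*} [Field K]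
    [StarRing K] {n : ℕ} {ι : Type*} [Fintype ι] [DecidableEq ι] (Φ : Matrix (Fin n) ι K)
    (g : Fin n → ι) (hg : IsUnit (Φ.submatrix id g)) :
    ∃ Ψ : Matrix (Fin n) ι K, Ψ * Φᴴ = 1 ∧ ∀ j, support (Ψ j) ⊆ Set.range g := by
  set A := Φ.submatrix id g
  have hselect : (1 : Matrix ι ι K).submatrix g id * Φᴴ = Aᴴ := by
    ext t i
    simp [A, mul_apply, one_apply]
  refine ⟨Aᴴ⁻¹ * (1 : Matrix ι ι K).submatrix g id, ?_, fun j k hk ↦ ?_⟩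
  · rw [Matrix.mul_assoc, hselect,
      nonsing_inv_mul _ ((isUnit_iff_isUnit_det _).mp ((isUnit_conjTranspose _).mpr hg))]
  · by_contra hkg
    refine hk (mul_apply.trans <| Finset.sum_eq_zero fun t _ ↦ ?_)
    simp [show g t ≠ k from fun h ↦ hkg ⟨t, h⟩]

lemma l0Norm_le_of_support_row_subset {𝕂 : Type} [RCLike 𝕂] {n m : ℕ}
    {Ψ : Matrix (Fin n) (Fin m) 𝕂} {s : Set (Fin m)} (h : ∀ j, support (Ψ j) ⊆ s) :
    l0Norm Ψ ≤ n * s.ncard := by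
  rw [l0Norm_eq_sum_ncard_support_row]
  exact (Finset.sum_le_sum fun j _ ↦ Set.ncard_le_ncard (h j)).trans_eq (by simp)

lemma sq_le_l0Norm_of_mul_conjTranspose_eq_one {𝕂 : Type} [RCLike 𝕂] {n m : ℕ}
    {Φ Ψ : Matrix (Fin n) (Fin m) 𝕂} (hGP : ∀ j, InGeneralPosition (deleteRow Φ j) (n - 1))
    (hΨ : Ψ * Φᴴ = 1) : n ^ 2 ≤ l0Norm Ψ := by
  rw [l0Norm_eq_sum_ncard_support_row, sq]
  exact (by simp : n * n = ∑ _j : Fin n, n).trans_le <| Finset.sum_le_sum fun j _ ↦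
    le_ncard_support_row_of_mul_conjTranspose_eq_one hGP hΨ j

/-- If each submatrix `Φ^(j)` (delete row `j`) of a frame `Φ` for `𝕂^n`
is in general position, then the minimum of `‖Ψ‖₀` over all dual frames `Ψ` of `Φ`
equals exactly `n²`. -/
theorem isLeast_l0Norm_dual_of_general_position {𝕂 : Type} [RCLike 𝕂] {n m : ℕ}
    (Φ : Matrix (Fin n) (Fin m) 𝕂) (hΦ : Φ.rank = n)
    (hGP : ∀ j : Fin n, InGeneralPosition (deleteRow Φ j) (n - 1)) :
    IsLeast {c | ∃ Ψ : Matrix (Fin n) (Fin m) 𝕂, Ψ * Φᴴ = 1 ∧ l0Norm Ψ = c}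
      (n ^ 2) := by
  obtain ⟨g, hg⟩ := Φ.exists_isUnit_submatrix_of_rank_eq hΦ
  obtain ⟨Ψ, hΨ, hsupp⟩ := Φ.exists_mul_conjTranspose_eq_one_of_isUnit_submatrix g hg
  have hrange : (Set.range g).ncard ≤ n := by
    simpa using Set.ncard_image_le (f := g) (Set.toFinite Set.univ)
  refine ⟨⟨Ψ, hΨ, le_antisymm ?_ (sq_le_l0Norm_of_mul_conjTranspose_eq_one hGP hΨ)⟩, ?_⟩
  · calc l0Norm Ψ ≤ n * (Set.range g).ncard := l0Norm_le_of_support_row_subset hsupp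
      _ ≤ n ^ 2 := by rw [sq]; exact Nat.mul_le_mul_left n hrange
  · rintro c ⟨Ψ', hΨ', rfl⟩
    exact sq_le_l0Norm_of_mul_conjTranspose_eq_one hGP hΨ'
end

section
/- Let n, m ∈ ℕ with m ≥ n ≥ 1, let a_1,…,a_m > 0 be pairwise distinct positive reals and b_1,…,b_n > 0 be pairwise distinct positive reals, and let Φ ∈ ℝ^{n×m} be the generalized Vandermonde matrix with entries Φ_{j,i} = a_i^{b_j}. Then for every j = 1,…,n the submatrix Φ^(j) is in general position, and consequently every dual frame Ψ of Φ satisfies ‖Ψ‖₀ ≥ n². -/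
/-!
A relation `∑ i, c i * a i ^ b r = 0` among columns of the generalized Vandermonde matrix says
that the exponential sum `t ↦ ∑ i, c i * exp (log (a i) * t)` vanishes at the points `b r`.
An exponential sum with `k` distinct frequencies that vanishes at `k` distinct points is zero:
dividing by one exponential does not move the zeros, and by Rolle's theorem the derivative of
the quotient, an exponential sum with `k - 1` frequencies, vanishes at `k - 1` points.
Hence every `n - 1` columns of `Φ^(j)` are independent. The `j`-th row of a dual frame lies in
the kernel of `Φ^(j)` and is nonzero, so it has at least `n` nonzero entries.
-/

open Matrix

open Finset Real

theorem exists_injective_deriv_eq_zero {f : ℝ → ℝ} (hf : Continuous f) {k : ℕ}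
    {x : Fin (k + 1) → ℝ} (hx : Function.Injective x) (hfx : ∀ i, f (x i) = 0) :
    ∃ y : Fin k → ℝ, Function.Injective y ∧ ∀ i, deriv f (y i) = 0 := by
  set x' := x ∘ Tuple.sort x
  have hx' : StrictMono x' :=
    (Tuple.monotone_sort x).strictMono_of_injective (hx.comp (Tuple.sort x).injective)
  have hrolle : ∀ i : Fin k, ∃ y ∈ Set.Ioo (x' i.castSucc) (x' i.succ), deriv f y = 0 :=
    fun i => exists_deriv_eq_zero (hx' i.castSucc_lt_succ) hf.continuousOn
      ((hfx _).trans (hfx _).symm)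
  choose y hy hy0 using hrolle
  refine ⟨y, StrictMono.injective fun i i' hii' => ?_, hy0⟩
  calc y i < x' i.succ := (hy i).2
    _ ≤ x' i'.castSucc := hx'.monotone (Fin.succ_le_castSucc_iff.2 hii')
    _ < y i' := (hy i').1

noncomputable def expSum {ι : Type*} [Fintype ι] (c μ : ι → ℝ) (t : ℝ) : ℝ :=
  ∑ j, c j * exp (μ j * t)

section ExpSum

variable {ι : Type*} [Fintype ι]

theorem continuous_expSum (c μ : ι → ℝ) : Continuous (expSum c μ) := by
  unfold expSum
  fun_prop

theorem hasDerivAt_expSum (c μ : ι → ℝ) (t : ℝ) :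
    HasDerivAt (expSum c μ) (expSum (c * μ) μ t) t := by
  refine HasDerivAt.fun_sum fun j _ => ?_
  refine ((((hasDerivAt_id' t).const_mul (μ j)).exp).const_mul (c j)).congr_deriv ?_
  simp only [Pi.mul_apply]
  ring

theorem expSum_sub_const (c μ : ι → ℝ) (ν t : ℝ) :
    expSum c (fun j => μ j - ν) t = exp (-(ν * t)) * expSum c μ t := by
  rw [expSum, expSum, mul_sum]
  refine sum_congr rfl fun j _ => ?_
  rw [sub_mul, sub_eq_neg_add, exp_add]
  ring

end ExpSum

theorem expSum_fin_succ {k : ℕ} (c μ : Fin (k + 1) → ℝ) (t : ℝ) :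
    expSum c μ t = c 0 * exp (μ 0 * t) + expSum (Fin.tail c) (Fin.tail μ) t :=
  Fin.sum_univ_succ _

theorem eq_zero_of_expSum_eq_zero {k : ℕ} {c μ : Fin k → ℝ} (hμ : Function.Injective μ)
    {t : Fin k → ℝ} (ht : Function.Injective t) (h : ∀ i, expSum c μ (t i) = 0) : c = 0 := by
  induction k with
  | zero => exact Subsingleton.elim _ _
  | succ k ih =>
    set μ' := fun j => μ j - μ 0
    have hzeros : ∀ i, expSum c μ' (t i) = 0 := fun i => by
      rw [expSum_sub_const, h, mul_zero]
    obtain ⟨y, hy, hy0⟩ := exists_injective_deriv_eq_zero (continuous_expSum c μ') ht hzeros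
    -- the derivative loses the term of frequency `μ' 0 = 0`
    have htail : Fin.tail (c * μ') = Fin.tail c * Fin.tail μ' := rfl
    have hμ' : Function.Injective (Fin.tail μ') := fun u v huv =>
      Fin.succ_injective _ (hμ (sub_left_inj.1 huv))
    have hcμ' : Fin.tail c * Fin.tail μ' = 0 := ih hμ' hy fun i => by
      rw [← hy0 i, (hasDerivAt_expSum c μ' _).deriv, expSum_fin_succ, ← htail]
      simp [μ']
    have hc : Fin.tail c = 0 := funext fun j => by
      have hne : μ' j.succ ≠ 0 := sub_ne_zero.2 (hμ.ne j.succ_ne_zero)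
      exact (mul_eq_zero.1 (congrFun hcμ' j)).resolve_right hne
    have hc0 : c 0 = 0 := by
      have := h 0
      rw [expSum_fin_succ, hc] at this
      simpa [expSum, (exp_pos _).ne'] using this
    ext j
    cases j using Fin.cases with
    | zero => exact hc0
    | succ j => exact congrFun hc j

theorem linearIndependent_exp_mul {ι κ : Type*} [Fintype ι] [Fintype κ]
    (hcard : Fintype.card ι ≤ Fintype.card κ) {μ : ι → ℝ} (hμ : Function.Injective μ)
    {t : κ → ℝ} (ht : Function.Injective t) :
    LinearIndependent ℝ (fun j : ι => fun i : κ => exp (μ j * t i)) := by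
  rw [Fintype.linearIndependent_iff]
  intro c hc j
  set e := (Fintype.equivFin ι).symm
  set emb := (Fin.castLEEmb hcard).trans (Fintype.equivFin κ).symm.toEmbedding
  have hce : c ∘ e = 0 := eq_zero_of_expSum_eq_zero (hμ.comp e.injective)
    (ht.comp emb.injective) fun i => by
      simpa [expSum, Equiv.sum_comp e fun j => c j * exp (μ j * t (emb i))]
        using congrFun hc (emb i)
  simpa using congrFun hce (e.symm j)

theorem linearIndependent_rpow {ι κ : Type*} [Fintype ι] [Fintype κ]
    (hcard : Fintype.card ι ≤ Fintype.card κ) {a : ι → ℝ} (ha : ∀ i, 0 < a i)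
    (ha' : Function.Injective a) {b : κ → ℝ} (hb : Function.Injective b) :
    LinearIndependent ℝ (fun i : ι => fun r : κ => a i ^ b r) := by
  have hlog : Function.Injective (fun i => log (a i)) := fun u v huv =>
    ha' (log_injOn_pos (ha u) (ha v) huv)
  convert linearIndependent_exp_mul hcard hlog hb using 3 with i r
  exact rpow_def_of_pos (ha i) _

theorem inGeneralPosition_deleteRow_rpow {n m : ℕ} {a : Fin m → ℝ} (ha : ∀ i, 0 < a i)
    (ha' : Function.Injective a) {b : Fin n → ℝ} (hb : Function.Injective b) (j : Fin n) :
    InGeneralPosition (deleteRow (Matrix.of fun r i => a i ^ b r) j) (n - 1) := by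
  intro S hS
  show LinearIndependent ℝ fun (i : S) (r : {r // r ≠ j}) => a i ^ b r
  exact linearIndependent_rpow (ι := S) (κ := {r // r ≠ j}) (by simp [hS]) (fun i => ha i)
    (ha'.comp Subtype.val_injective) (hb.comp Subtype.val_injective)

section GeneralPosition

variable {𝕂 : Type} [RCLike 𝕂]

theorem InGeneralPosition.lt_card_support {l : Type} [Fintype l] {m k : ℕ}
    {M : Matrix l (Fin m) 𝕂} (hM : InGeneralPosition M k) (hkm : k ≤ m) {v : Fin m → 𝕂}
    (hv : M *ᵥ v = 0) (hv0 : v ≠ 0) : k < #{i | v i ≠ 0} := by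
  by_contra! hcard
  obtain ⟨S, hsupp, hS⟩ := exists_superset_card_eq hcard (by simpa using hkm)
  have hvS : ∀ i ∉ S, v i = 0 := fun i hi => by
    by_contra hne
    exact hi (hsupp (by simpa using hne))
  have hrel : ∑ i : S, v i • (fun r => M r i) = 0 := by
    ext r
    rw [← congrFun hv r, Finset.sum_apply, sum_coe_sort S fun i => (v i • fun r => M r i) r,
      sum_subset (subset_univ S) fun i _ hi => by simp [hvS i hi]]
    simp [mulVec, dotProduct, mul_comm]
  refine hv0 (funext fun i => ?_)
  by_cases hi : i ∈ S
  · exact Fintype.linearIndependent_iff.1 (hM S hS) (fun i => v i) hrel ⟨i, hi⟩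
  · exact hvS i hi

theorem deleteRow_mulVec_row_eq_zero {n m : ℕ} {Φ Ψ : Matrix (Fin n) (Fin m) 𝕂}
    (hΨ : Ψ * Φᵀ = 1) (j : Fin n) : deleteRow Φ j *ᵥ Ψ j = 0 := by
  ext r
  have := congrFun (congrFun hΨ j) r
  rw [mul_apply, one_apply_ne (Ne.symm r.2)] at this
  simpa [deleteRow, mulVec, dotProduct, mul_comm] using this

theorem row_ne_zero_of_mul_eq_one {n m : ℕ} {Ψ : Matrix (Fin n) (Fin m) 𝕂}
    {A : Matrix (Fin m) (Fin n) 𝕂} (hΨ : Ψ * A = 1) (j : Fin n) : Ψ j ≠ 0 := by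
  intro h
  have := congrFun (congrFun hΨ j) j
  simp [mul_apply, h] at this

theorem l0Norm_eq_sum_card_row_support {n m : ℕ} (Ψ : Matrix (Fin n) (Fin m) 𝕂) :
    l0Norm Ψ = ∑ j, #{i | Ψ j i ≠ 0} := by
  rw [l0Norm, Set.ncard_eq_toFinset_card', Set.toFinset_ofPred, card_filter,
    Fintype.sum_prod_type]
  simp only [card_filter]

theorem sq_le_l0Norm_of_mul_transpose_eq_one {n m : ℕ} {Φ Ψ : Matrix (Fin n) (Fin m) 𝕂}
    (hΦ : ∀ j, InGeneralPosition (deleteRow Φ j) (n - 1)) (hnm : n - 1 ≤ m)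
    (hΨ : Ψ * Φᵀ = 1) : n ^ 2 ≤ l0Norm Ψ := by
  have hrow : ∀ j, n ≤ #{i | Ψ j i ≠ 0} := fun j => by
    have := (hΦ j).lt_card_support hnm (deleteRow_mulVec_row_eq_zero hΨ j)
      (row_ne_zero_of_mul_eq_one hΨ j)
    omega
  calc n ^ 2 = ∑ _j : Fin n, n := by simp [sq]
    _ ≤ l0Norm Ψ := l0Norm_eq_sum_card_row_support Ψ ▸ sum_le_sum fun j _ => hrow j

end GeneralPosition

theorem generalized_vandermonde_general_position_general {n m : ℕ}
    (hnm : n ≤ m)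
    (a : Fin m → ℝ) (ha : ∀ i, 0 < a i) (ha' : Function.Injective a)
    (b : Fin n → ℝ) (hb' : Function.Injective b)
    (Φ : Matrix (Fin n) (Fin m) ℝ) (hΦ : ∀ j i, Φ j i = a i ^ b j) :
    (∀ j : Fin n, InGeneralPosition (deleteRow Φ j) (n - 1)) ∧
    ∀ Ψ : Matrix (Fin n) (Fin m) ℝ, Ψ * Φᴴ = 1 → n ^ 2 ≤ l0Norm Ψ := by
  obtain rfl : Φ = Matrix.of fun j i => a i ^ b j := Matrix.ext hΦ
  have hgp := inGeneralPosition_deleteRow_rpow ha ha' hb'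
  refine ⟨hgp, fun Ψ hΨ => sq_le_l0Norm_of_mul_transpose_eq_one hgp (by omega) ?_⟩
  rwa [conjTranspose_eq_transpose_of_trivial] at hΨ

/-- For pairwise distinct positive reals `a_1,…,a_m` and pairwise
distinct positive reals `b_1,…,b_n` (with `m ≥ n ≥ 1`), the generalized Vandermonde
matrix `Φ_{j,i} = a_i ^ b_j` has every row-deleted submatrix `Φ^(j)` in general
position; consequently every dual frame `Ψ` of `Φ` satisfies `‖Ψ‖₀ ≥ n²`. -/
theorem generalized_vandermonde_general_position {n m : ℕ}
    (hn : 1 ≤ n) (hnm : n ≤ m)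
    (a : Fin m → ℝ) (ha : ∀ i, 0 < a i) (ha' : Function.Injective a)
    (b : Fin n → ℝ) (hb : ∀ j, 0 < b j) (hb' : Function.Injective b)
    (Φ : Matrix (Fin n) (Fin m) ℝ) (hΦ : ∀ j i, Φ j i = a i ^ b j) :
    (∀ j : Fin n, InGeneralPosition (deleteRow Φ j) (n - 1)) ∧
    ∀ Ψ : Matrix (Fin n) (Fin m) ℝ, Ψ * Φᴴ = 1 → n ^ 2 ≤ l0Norm Ψ :=
  generalized_vandermonde_general_position_general hnm a ha ha' b hb' Φ hΦ
end
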